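/- Let U : (−δ, δ) → ℝ^{n×p} and Λ : (−δ, δ) → ℝ^{p×p} be differentiable curves with U(t)ᵀU(t) = I_p and Λ(t) diagonal for all t, and set P(t) = U(t)Λ(t)U(t)ᵀ. Then for any skew-symmetric Z ∈ ℝ^{n×n} satisfying U̇(0) = Z U(0), the derivative of P at t = 0 equals Ṗ(0) = [Z, P(0)] + U(0) Λ̇(0) U(0)ᵀ, where [Z,P] = ZP − PZ; moreover such a skew-symmetric Z always exists. Hence every tangent vector to the spectral manifold M = {UΛUᵀ : UᵀU = I_p, Λ diagonal with entries in [0,1)} at P = UΛUᵀ has the form U Λ̇ Uᵀ + [Z, P] with Λ̇ diagonal and Z skew-symmetric. -/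

import Mathlib

/-!
Differentiating `UᵀU = I` at `0` shows that `U̇ᵀU` is skew, and this is exactly what makes
`Z = U̇Uᵀ - UU̇ᵀ - U(UᵀU̇)Uᵀ` skew with `ZU = U̇` (everything evaluated at `0`).
For any such `Z` the product rule gives `Ṗ = (ZU)ΛUᵀ + UΛ(ZU)ᵀ + UΛ̇Uᵀ`, and `Zᵀ = -Z` turns
the first two terms into `ZP - PZ`.
-/

open Matrix Filter Topology

attribute [local instance] Matrix.frobeniusNormedAddCommGroup Matrix.frobeniusNormedSpace

section Calculus

variable {𝕜 : Type*} [RCLike 𝕜] {l m q : Type*} [Fintype l] [Fintype m] [Fintype q] {t : 𝕜}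

theorem isBoundedBilinearMap_matrix_mul :
    IsBoundedBilinearMap 𝕜 (fun x : Matrix l m 𝕜 × Matrix m q 𝕜 => x.1 * x.2) where
  add_left := Matrix.add_mul
  smul_left := Matrix.smul_mul
  add_right := Matrix.mul_add
  smul_right c A B := Matrix.mul_smul A c B
  bound := ⟨1, one_pos, fun A B => by simpa using frobenius_norm_mul A B⟩

theorem HasDerivAt.matrix_mul {f : 𝕜 → Matrix l m 𝕜} {g : 𝕜 → Matrix m q 𝕜}
    {f' : Matrix l m 𝕜} {g' : Matrix m q 𝕜} (hf : HasDerivAt f f' t) (hg : HasDerivAt g g' t) :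
    HasDerivAt (fun s => f s * g s) (f' * g t + f t * g') t := by
  have h := (isBoundedBilinearMap_matrix_mul.hasFDerivAt (f t, g t)).comp_hasDerivAt t
    (hf.prodMk hg)
  simp only [Function.comp_def, IsBoundedBilinearMap.deriv_apply, add_comm] at h
  exact h

theorem HasDerivAt.matrix_transpose {f : 𝕜 → Matrix l m 𝕜} {f' : Matrix l m 𝕜}
    (hf : HasDerivAt f f' t) : HasDerivAt (fun s => (f s)ᵀ) f'ᵀ t :=
  (transposeLinearEquiv l m 𝕜 𝕜).toLinearMap.toContinuousLinearMap.hasFDerivAt.comp_hasDerivAt t hf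

theorem HasDerivAt.matrix_diagonal [DecidableEq l] {f : 𝕜 → l → 𝕜} {f' : l → 𝕜}
    (hf : HasDerivAt f f' t) : HasDerivAt (fun s => diagonal (f s)) (diagonal f') t :=
  (diagonalLinearMap l 𝕜 𝕜).toContinuousLinearMap.hasFDerivAt.comp_hasDerivAt t hf

theorem HasDerivAt.matrix_mul_diagonal_mul_transpose [DecidableEq m]
    {U : 𝕜 → Matrix l m 𝕜} {Λ : 𝕜 → m → 𝕜} {U' : Matrix l m 𝕜} {Λ' : m → 𝕜}
    (hU : HasDerivAt U U' t) (hΛ : HasDerivAt Λ Λ' t) :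
    HasDerivAt (fun s => U s * diagonal (Λ s) * (U s)ᵀ)
      (U' * diagonal (Λ t) * (U t)ᵀ + U t * diagonal (Λ t) * U'ᵀ +
        U t * diagonal Λ' * (U t)ᵀ) t := by
  convert (hU.matrix_mul hΛ.matrix_diagonal).matrix_mul hU.matrix_transpose using 1
  simp only [Matrix.add_mul]
  abel

theorem HasDerivAt.transpose_mul_add_transpose_mul_eq_zero {U : 𝕜 → Matrix l m 𝕜}
    {U' : Matrix l m 𝕜} {C : Matrix m m 𝕜} (hU : HasDerivAt U U' t)
    (hC : ∀ᶠ s in 𝓝 t, (U s)ᵀ * U s = C) :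
    U'ᵀ * U t + (U t)ᵀ * U' = 0 :=
  (hU.matrix_transpose.matrix_mul hU).unique ((hasDerivAt_const t C).congr_of_eventuallyEq hC)

end Calculus

section Algebra

variable {R : Type*} [CommRing R] {m q : Type*} [Fintype m] [Fintype q]

theorem exists_transpose_eq_neg_and_eq_mul_of_transpose_mul_eq_one [DecidableEq q]
    {U V : Matrix m q R} (hU : Uᵀ * U = 1) (hV : Vᵀ * U + Uᵀ * V = 0) :
    ∃ Z : Matrix m m R, Zᵀ = -Z ∧ V = Z * U := by
  have hVU : Vᵀ * U = -(Uᵀ * V) := eq_neg_of_add_eq_zero_left hV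
  refine ⟨V * Uᵀ - U * Vᵀ - U * (Uᵀ * V) * Uᵀ, ?_, ?_⟩
  · have : U * (Vᵀ * U) * Uᵀ = -(U * (Uᵀ * V) * Uᵀ) := by
      rw [hVU, Matrix.mul_neg, Matrix.neg_mul]
    simp only [transpose_sub, transpose_mul, transpose_transpose, ← Matrix.mul_assoc] at this ⊢
    rw [this]
    abel
  · simp only [Matrix.sub_mul, Matrix.mul_assoc, hU, hVU, Matrix.mul_one, Matrix.mul_neg]
    abel

theorem skew_mul_mul_mul_transpose_add {Z : Matrix m m R} (hZ : Zᵀ = -Z) (U : Matrix m q R)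
    (D : Matrix q q R) :
    Z * U * D * Uᵀ + U * D * (Z * U)ᵀ = Z * (U * D * Uᵀ) - U * D * Uᵀ * Z := by
  rw [transpose_mul, hZ]
  simp only [Matrix.mul_neg, Matrix.mul_assoc, sub_eq_add_neg]

end Algebra

theorem stmt_10_general {n p : ℕ} (δ : ℝ) (hδ : 0 < δ)
    (U : ℝ → Matrix (Fin n) (Fin p) ℝ) (Λ : ℝ → Fin p → ℝ)
    (U' : Matrix (Fin n) (Fin p) ℝ) (Λ' : Fin p → ℝ)
    (hUst : ∀ t ∈ Set.Ioo (-δ) δ, (U t)ᵀ * U t = 1)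
    (hU0 : HasDerivAt U U' 0) (hΛ0 : HasDerivAt Λ Λ' 0) :
    (∃ Z : Matrix (Fin n) (Fin n) ℝ, Zᵀ = -Z ∧ U' = Z * U 0) ∧
    (∀ Z : Matrix (Fin n) (Fin n) ℝ, Zᵀ = -Z → U' = Z * U 0 →
      HasDerivAt (fun t => U t * diagonal (Λ t) * (U t)ᵀ)
        ((Z * (U 0 * diagonal (Λ 0) * (U 0)ᵀ) - (U 0 * diagonal (Λ 0) * (U 0)ᵀ) * Z) +
          U 0 * diagonal Λ' * (U 0)ᵀ) 0) := by
  have h0 : (0 : ℝ) ∈ Set.Ioo (-δ) δ := ⟨neg_lt_zero.mpr hδ, hδ⟩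
  have hStiefel : ∀ᶠ t in 𝓝 0, (U t)ᵀ * U t = 1 :=
    eventually_of_mem (isOpen_Ioo.mem_nhds h0) hUst
  refine ⟨exists_transpose_eq_neg_and_eq_mul_of_transpose_mul_eq_one (hUst 0 h0)
    (hU0.transpose_mul_add_transpose_mul_eq_zero hStiefel), fun Z hZ hZU => ?_⟩
  subst hZU
  rw [← skew_mul_mul_mul_transpose_add hZ]
  exact hU0.matrix_mul_diagonal_mul_transpose hΛ0

/-- for differentiable curves `U(t)` (with `U(t)ᵀU(t) = I`) and diagonal
`Λ(t)` on `(−δ,δ)`, setting `P(t) = U(t)Λ(t)U(t)ᵀ`: there always exists a skew-symmetric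
`Z` with `U̇(0) = Z U(0)`, and for any such `Z` the derivative of `P` at `0` is
`Ṗ(0) = [Z, P(0)] + U(0) Λ̇(0) U(0)ᵀ`.  Hence every tangent vector of the spectral
manifold at `P = UΛUᵀ` has the form `UΛ̇Uᵀ + [Z,P]` with `Λ̇` diagonal and `Z` skew. -/
theorem stmt_10 {n p : ℕ} (δ : ℝ) (hδ : 0 < δ)
    (U : ℝ → Matrix (Fin n) (Fin p) ℝ) (Λ : ℝ → Fin p → ℝ)
    (U' : Matrix (Fin n) (Fin p) ℝ) (Λ' : Fin p → ℝ)
    (hUst : ∀ t ∈ Set.Ioo (-δ) δ, (U t)ᵀ * U t = 1)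
    (hUdiff : ∀ t ∈ Set.Ioo (-δ) δ, DifferentiableAt ℝ U t)
    (hΛdiff : ∀ t ∈ Set.Ioo (-δ) δ, DifferentiableAt ℝ Λ t)
    (hU0 : HasDerivAt U U' 0) (hΛ0 : HasDerivAt Λ Λ' 0) :
    (∃ Z : Matrix (Fin n) (Fin n) ℝ, Zᵀ = -Z ∧ U' = Z * U 0) ∧
    (∀ Z : Matrix (Fin n) (Fin n) ℝ, Zᵀ = -Z → U' = Z * U 0 →
      HasDerivAt (fun t => U t * diagonal (Λ t) * (U t)ᵀ)
        ((Z * (U 0 * diagonal (Λ 0) * (U 0)ᵀ) - (U 0 * diagonal (Λ 0) * (U 0)ᵀ) * Z) +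
          U 0 * diagonal Λ' * (U 0)ᵀ) 0) :=
  stmt_10_general δ hδ U Λ U' Λ' hUst hU0 hΛ0
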